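/- arXiv:1004.4012 — 4 statements merged into one kernel-verified Lean document; each statement's English description precedes it below -/
import Mathlib

section
/- Fix d ≥ 2 and constants c_1, c_2, C_1 > 0. There exists a constant C > 0 depending only on d, c_1, c_2, C_1 with the following property. Let F_q be a finite field with q elements, χ : F_q → ℂ a nontrivial additive character, P ∈ F_q[x_1,…,x_d] a polynomial, and for t ∈ F_q set V_t = { x ∈ F_q^d : P(x) = t }. Suppose there is a set T ⊆ F_q such that: (i) c_1 q^{d−1} ≤ |V_t| ≤ c_2 q^{d−1} for all t ∈ F_q \ T, and (ii) |∑_{x ∈ V_t} χ(−x·m)| ≤ C_1 q^{(d−1)/2} for all t ∈ F_q \ T and all m ∈ F_q^d \ {0}. Then for all sets E, F ⊆ F_q^d with |E|·|F| ≥ C q^{d+1}, the distance set satisfies |Δ_P(E,F)| ≥ q − |T|. -/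
/-!
Fourier inversion on `F_q^d` writes `q^d · #{(x, y) ∈ E × F | P(x - y) = t}` as a sum over
frequencies. The zero frequency gives `|V_t||E||F| ≥ c₁ q^{d-1} |E||F|`; by the decay hypothesis,
Cauchy–Schwarz and Parseval, the others sum to at most `C₁ q^{(d-1)/2} · q^d √(|E||F|)`. Once
`|E||F| > (C₁/c₁)^2 q^{d+1}` the main term wins, so every `t ∉ T` is a distance.
-/

open Finset Matrix ComplexConjugate

namespace FalconerDistance

variable {K ι : Type*} [Field K] [Fintype K] [Fintype ι]

/-- `q^d` times the Fourier transform of the indicator of `A`, in the sign convention of the decay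
hypothesis. -/
def charSum (χ : AddChar K ℂ) (A : Finset (ι → K)) (m : ι → K) : ℂ :=
  ∑ x ∈ A, χ (-(x ⬝ᵥ m))

theorem conj_charSum (χ : AddChar K ℂ) (A : Finset (ι → K)) (m : ι → K) :
    conj (charSum χ A m) = ∑ x ∈ A, χ (x ⬝ᵥ m) := by
  simp [charSum, AddChar.map_neg_eq_conj]

variable [DecidableEq K] [DecidableEq ι]

theorem sum_apply_dotProduct {χ : AddChar K ℂ} (hχ : χ ≠ 1) (z : ι → K) :
    ∑ m, χ (z ⬝ᵥ m) = if z = 0 then (Fintype.card K : ℂ) ^ Fintype.card ι else 0 := by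
  split_ifs with hz
  · simp [hz, card_univ]
  obtain ⟨i, hi⟩ := Function.ne_iff.mp hz
  obtain ⟨a, ha⟩ := AddChar.ne_one_iff.mp hχ
  let ψ : AddChar (ι → K) ℂ := χ.compAddMonoidHom (dotProductBilin K K z).toAddMonoidHom
  have hψ : ψ ≠ 1 := AddChar.ne_one_iff.mpr
    ⟨Pi.single i (a / z i), by simpa [ψ, dotProduct_single, mul_div_cancel₀ _ hi] using ha⟩
  exact AddChar.sum_eq_zero_of_ne_one hψ

theorem sum_conj_charSum_mul_charSum_mul_charSum {χ : AddChar K ℂ} (hχ : χ ≠ 1)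
    (A B V : Finset (ι → K)) :
    ∑ m, conj (charSum χ A m) * charSum χ B m * charSum χ V m =
      (Fintype.card K : ℂ) ^ Fintype.card ι * #{p ∈ A ×ˢ B | p.1 - p.2 ∈ V} := by
  have hphase (x y v m : ι → K) :
      χ (x ⬝ᵥ m) * χ (-(y ⬝ᵥ m)) * χ (-(v ⬝ᵥ m)) = χ ((x - y - v) ⬝ᵥ m) := by
    rw [← AddChar.map_add_eq_mul, ← AddChar.map_add_eq_mul, sub_dotProduct, sub_dotProduct]
    ring_nf
  have hexpand (m : ι → K) : conj (charSum χ A m) * charSum χ B m * charSum χ V m =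
      ∑ p ∈ A ×ˢ B, ∑ v ∈ V, χ ((p.1 - p.2 - v) ⬝ᵥ m) := by
    rw [conj_charSum, charSum, charSum, sum_mul_sum, ← sum_product', sum_mul]
    simp only [mul_sum, hphase]
  calc ∑ m, conj (charSum χ A m) * charSum χ B m * charSum χ V m
      = ∑ p ∈ A ×ˢ B, ∑ v ∈ V, ∑ m, χ ((p.1 - p.2 - v) ⬝ᵥ m) := by
        simp only [hexpand]
        rw [sum_comm]
        exact sum_congr rfl fun p _ => sum_comm
    _ = ∑ p ∈ A ×ˢ B, if p.1 - p.2 ∈ V then (Fintype.card K : ℂ) ^ Fintype.card ι else 0 := by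
        refine sum_congr rfl fun p _ => ?_
        simp only [sum_apply_dotProduct hχ, sub_eq_zero, eq_comm (a := p.1 - p.2)]
        exact sum_ite_eq' V _ _
    _ = _ := by rw [← sum_filter, sum_const, nsmul_eq_mul, mul_comm]

theorem sum_norm_charSum_sq {χ : AddChar K ℂ} (hχ : χ ≠ 1) (A : Finset (ι → K)) :
    ∑ m, ‖charSum χ A m‖ ^ 2 = (Fintype.card K : ℝ) ^ Fintype.card ι * #A := by
  have hcount := sum_conj_charSum_mul_charSum_mul_charSum hχ A A {0}
  have hdiag : #{p ∈ A ×ˢ A | p.1 - p.2 ∈ ({0} : Finset (ι → K))} = #A := by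
    simp only [mem_singleton, sub_eq_zero, ← diag_eq_filter, diag_card]
  have hzero (m : ι → K) : charSum χ {0} m = 1 := by simp [charSum]
  simp only [hzero, mul_one, Complex.conj_mul', hdiag] at hcount
  exact_mod_cast hcount

theorem sum_norm_charSum_mul_norm_charSum_le {χ : AddChar K ℂ} (hχ : χ ≠ 1)
    (A B : Finset (ι → K)) :
    ∑ m, ‖charSum χ A m‖ * ‖charSum χ B m‖ ≤
      (Fintype.card K : ℝ) ^ Fintype.card ι * √(#A * #B) := by
  calc ∑ m, ‖charSum χ A m‖ * ‖charSum χ B m‖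
      ≤ √(∑ m, ‖charSum χ A m‖ ^ 2) * √(∑ m, ‖charSum χ B m‖ ^ 2) :=
        Real.sum_mul_le_sqrt_mul_sqrt _ _ _
    _ = (Fintype.card K : ℝ) ^ Fintype.card ι * √(#A * #B) := by
        rw [sum_norm_charSum_sq hχ, sum_norm_charSum_sq hχ, ← Real.sqrt_mul (by positivity),
          mul_mul_mul_comm, ← sq, Real.sqrt_mul (by positivity), Real.sqrt_sq (by positivity)]

theorem card_mul_card_mul_card_le {χ : AddChar K ℂ} (hχ : χ ≠ 1) (A B V : Finset (ι → K))
    {b : ℝ} (hb : 0 ≤ b) (hdecay : ∀ m ≠ 0, ‖charSum χ V m‖ ≤ b) :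
    (#V * #A * #B : ℝ) ≤ (Fintype.card K : ℝ) ^ Fintype.card ι *
      (#{p ∈ A ×ˢ B | p.1 - p.2 ∈ V} + b * √(#A * #B)) := by
  set S : (ι → K) → ℂ := fun m => conj (charSum χ A m) * charSum χ B m * charSum χ V m
  have hS0 : S 0 = #V * #A * #B := by simp [S, charSum]; ring
  have hrest : ‖∑ m ∈ univ.erase 0, S m‖ ≤
      (Fintype.card K : ℝ) ^ Fintype.card ι * (b * √(#A * #B)) := calc
    ‖∑ m ∈ univ.erase 0, S m‖ ≤ ∑ m ∈ univ.erase 0, ‖S m‖ := norm_sum_le _ _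
    _ ≤ ∑ m ∈ univ.erase 0, b * (‖charSum χ A m‖ * ‖charSum χ B m‖) := by
        refine sum_le_sum fun m hm => ?_
        simp only [S, norm_mul, Complex.norm_conj]
        rw [mul_comm b]
        gcongr
        exact hdecay m (ne_of_mem_erase hm)
    _ ≤ b * ∑ m, ‖charSum χ A m‖ * ‖charSum χ B m‖ := by
        rw [← mul_sum]
        gcongr
        exact erase_subset _ _
    _ ≤ (Fintype.card K : ℝ) ^ Fintype.card ι * (b * √(#A * #B)) := by
        rw [mul_left_comm]
        gcongr
        exact sum_norm_charSum_mul_norm_charSum_le hχ A B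
  have hmain : (#V * #A * #B : ℂ) =
      (Fintype.card K : ℂ) ^ Fintype.card ι * #{p ∈ A ×ˢ B | p.1 - p.2 ∈ V} -
        ∑ m ∈ univ.erase 0, S m := by
    have hcount : ∑ m, S m = _ := sum_conj_charSum_mul_charSum_mul_charSum hχ A B V
    rw [← hcount, ← add_sum_erase univ S (mem_univ 0), hS0]
    ring
  calc (#V * #A * #B : ℝ) = ‖(#V * #A * #B : ℂ)‖ := by norm_cast
    _ ≤ ‖(Fintype.card K : ℂ) ^ Fintype.card ι * #{p ∈ A ×ˢ B | p.1 - p.2 ∈ V}‖ +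
          ‖∑ m ∈ univ.erase 0, S m‖ := hmain ▸ norm_sub_le _ _
    _ ≤ _ := by
        rw [mul_add]
        gcongr
        norm_cast

theorem exists_sub_mem_of_card_mul_card_ge {χ : AddChar K ℂ} (hχ : χ ≠ 1)
    (hι : 1 ≤ Fintype.card ι) {c₁ C₁ : ℝ} (hc₁ : 0 < c₁) (hC₁ : 0 ≤ C₁)
    {A B V : Finset (ι → K)}
    (hV : c₁ * (Fintype.card K : ℝ) ^ (Fintype.card ι - 1) ≤ #V)
    (hdecay : ∀ m ≠ 0, ‖charSum χ V m‖ ≤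
      C₁ * (Fintype.card K : ℝ) ^ (((Fintype.card ι : ℝ) - 1) / 2))
    (hAB : ((C₁ / c₁) ^ 2 + 1) * (Fintype.card K : ℝ) ^ (Fintype.card ι + 1) ≤ #A * #B) :
    ∃ p ∈ A ×ˢ B, p.1 - p.2 ∈ V := by
  set n := Fintype.card ι
  set q : ℝ := (Fintype.card K : ℝ)
  set Q : ℝ := q ^ (n - 1)
  set r : ℝ := q ^ (((n : ℝ) - 1) / 2)
  set s : ℝ := √(#A * #B)
  have hq : 0 < q := by positivity
  have hQ : 0 < Q := by positivity
  have hr : 0 < r := by positivity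
  have hr_sq : r ^ 2 = Q := by
    rw [← Real.rpow_natCast, ← Real.rpow_mul hq.le, Nat.cast_ofNat, div_mul_cancel₀ _ two_ne_zero,
      ← Nat.cast_one, ← Nat.cast_sub hι, Real.rpow_natCast]
  have hqn : q ^ n = Q * q := (pow_sub_one_mul (by omega) q).symm
  have hqn1 : q ^ (n + 1) = Q * q ^ 2 := by rw [← pow_add]; congr 1; omega
  have hs_sq : s ^ 2 = #A * #B := Real.sq_sqrt (by positivity)
  have hs : 0 < s := Real.sqrt_pos.mpr (lt_of_lt_of_le (by positivity) hAB)
  by_contra hnone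
  have hN : #{p ∈ A ×ˢ B | p.1 - p.2 ∈ V} = 0 := by
    simpa [filter_eq_empty_iff] using hnone
  have hcount := card_mul_card_mul_card_le hχ A B V (by positivity) hdecay
  rw [hN, Nat.cast_zero, zero_add] at hcount
  have hlin : c₁ * r * s ≤ C₁ * q ^ n := by
    refine le_of_mul_le_mul_right ?_ (mul_pos hr hs)
    calc c₁ * r * s * (r * s) = c₁ * Q * (#A * #B) := by rw [← hr_sq, ← hs_sq]; ring
      _ ≤ #V * #A * #B := by rw [mul_assoc (#V : ℝ)]; gcongr
      _ ≤ q ^ n * (C₁ * r * s) := hcount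
      _ = C₁ * q ^ n * (r * s) := by ring
  have hsq : c₁ ^ 2 * (#A * #B) ≤ C₁ ^ 2 * (Q * q ^ 2) := by
    have := pow_le_pow_left₀ (by positivity) hlin 2
    rw [mul_pow, mul_pow, hr_sq, hs_sq, mul_pow, hqn] at this
    nlinarith
  have hgap : (C₁ ^ 2 + c₁ ^ 2) * (Q * q ^ 2) ≤ c₁ ^ 2 * (#A * #B) := by
    rw [hqn1] at hAB
    calc (C₁ ^ 2 + c₁ ^ 2) * (Q * q ^ 2) = c₁ ^ 2 * (((C₁ / c₁) ^ 2 + 1) * (Q * q ^ 2)) := by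
          field_simp
      _ ≤ c₁ ^ 2 * (#A * #B) := by gcongr
  nlinarith [mul_pos hQ (pow_pos hq 2), sq_pos_of_pos hc₁]

end FalconerDistance

theorem stmt1_general (d : ℕ) (hd : 2 ≤ d) (c₁ c₂ C₁ : ℝ)
    (hc₁ : 0 < c₁) (hC₁ : 0 < C₁) :
    ∃ C : ℝ, 0 < C ∧
      ∀ (K : Type) [Field K] [Fintype K] [DecidableEq K]
        (χ : AddChar K ℂ), χ ≠ 1 →
        ∀ (P : MvPolynomial (Fin d) K) (T : Finset K),
          (∀ t ∉ T,
            c₁ * (Fintype.card K : ℝ) ^ (d - 1) ≤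
              ((Finset.univ.filter
                (fun x : Fin d → K => MvPolynomial.eval x P = t)).card : ℝ) ∧
            ((Finset.univ.filter
                (fun x : Fin d → K => MvPolynomial.eval x P = t)).card : ℝ) ≤
              c₂ * (Fintype.card K : ℝ) ^ (d - 1)) →
          (∀ t ∉ T, ∀ m : Fin d → K, m ≠ 0 →
            ‖(∑ x ∈ Finset.univ.filter
                  (fun x : Fin d → K => MvPolynomial.eval x P = t),
                χ (-(∑ i, x i * m i)))‖ ≤
              C₁ * (Fintype.card K : ℝ) ^ (((d : ℝ) - 1) / 2)) →
          ∀ E F : Finset (Fin d → K),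
            C * (Fintype.card K : ℝ) ^ (d + 1) ≤ (E.card : ℝ) * (F.card : ℝ) →
            (Fintype.card K : ℝ) - (T.card : ℝ) ≤
              (((E ×ˢ F).image
                (fun p => MvPolynomial.eval (p.1 - p.2) P)).card : ℝ) := by
  refine ⟨(C₁ / c₁) ^ 2 + 1, by positivity, ?_⟩
  intro K _ _ _ χ hχ P T hsize hdecay E F hEF
  have hcover : Tᶜ ⊆ (E ×ˢ F).image (fun p => MvPolynomial.eval (p.1 - p.2) P) := by
    intro t ht
    rw [mem_compl] at ht
    obtain ⟨p, hp, hpV⟩ := FalconerDistance.exists_sub_mem_of_card_mul_card_ge hχ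
      (by rw [Fintype.card_fin]; omega) hc₁ hC₁.le
      (V := {x | MvPolynomial.eval x P = t})
      (by simpa only [Fintype.card_fin] using (hsize t ht).1)
      (fun m hm => by rw [Fintype.card_fin]; exact hdecay t ht m hm)
      (by simpa only [Fintype.card_fin] using hEF)
    exact mem_image.mpr ⟨p, hp, (mem_filter.mp hpV).2⟩
  have hcard := card_le_card hcover
  rw [card_compl] at hcard
  have hT := card_le_univ T
  rw [sub_le_iff_le_add]
  exact_mod_cast (by omega : Fintype.card K ≤ _ + #T)

/-- A generalized Falconer distance formula. If the varieties
`V_t = {x : P(x) = t}` have size `≍ q^{d-1}` and Fourier decay `q^{(d-1)/2}`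
for all `t` outside an exceptional set `T`, then `|E||F| ≥ C q^{d+1}` implies
`|Δ_P(E,F)| ≥ q - |T|`. -/
theorem stmt1 (d : ℕ) (hd : 2 ≤ d) (c₁ c₂ C₁ : ℝ)
    (hc₁ : 0 < c₁) (hc₂ : 0 < c₂) (hC₁ : 0 < C₁) :
    ∃ C : ℝ, 0 < C ∧
      ∀ (K : Type) [Field K] [Fintype K] [DecidableEq K]
        (χ : AddChar K ℂ), χ ≠ 1 →
        ∀ (P : MvPolynomial (Fin d) K) (T : Finset K),
          (∀ t ∉ T,
            c₁ * (Fintype.card K : ℝ) ^ (d - 1) ≤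
              ((Finset.univ.filter
                (fun x : Fin d → K => MvPolynomial.eval x P = t)).card : ℝ) ∧
            ((Finset.univ.filter
                (fun x : Fin d → K => MvPolynomial.eval x P = t)).card : ℝ) ≤
              c₂ * (Fintype.card K : ℝ) ^ (d - 1)) →
          (∀ t ∉ T, ∀ m : Fin d → K, m ≠ 0 →
            ‖(∑ x ∈ Finset.univ.filter
                  (fun x : Fin d → K => MvPolynomial.eval x P = t),
                χ (-(∑ i, x i * m i)))‖ ≤
              C₁ * (Fintype.card K : ℝ) ^ (((d : ℝ) - 1) / 2)) →
          ∀ E F : Finset (Fin d → K),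
            C * (Fintype.card K : ℝ) ^ (d + 1) ≤ (E.card : ℝ) * (F.card : ℝ) →
            (Fintype.card K : ℝ) - (T.card : ℝ) ≤
              (((E ×ˢ F).image
                (fun p => MvPolynomial.eval (p.1 - p.2) P)).card : ℝ) :=
  stmt1_general d hd c₁ c₂ C₁ hc₁ hC₁
end

section
/- Fix an integer d ≥ 1 and a constant A > 0. There exist constants C > 0 and c > 0 depending only on d and A with the following property. Let F_q be a finite field with q elements, χ : F_q → ℂ a nontrivial additive character, and P ∈ F_q[x_1,…,x_d] a polynomial such that for every m ∈ F_q^d and every s ∈ F_q \ {0}, |∑_{x ∈ F_q^d} χ( s·P(x) + m·x )| ≤ A q^{d/2}. Then for all sets E, F ⊆ F_q^d with |E|·|F| ≥ C q^{d+1}, the distance set satisfies |Δ_P(E,F)| ≥ c q. -/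
/-!
Put `G = E × F` and `v(x, y) = P(x - y)`, and let `N` count the pairs of points of `G` with equal
values of `v`. Cauchy–Schwarz over the fibres of `v` gives `|G|² ≤ |Δ| N`, while orthogonality of
the characters `t ↦ χ(s t)` gives `q N = ∑ₛ |∑_{(x,y) ∈ G} χ(s v(x, y))|²`. The term `s = 0` equals
`|G|²`. For `s ≠ 0`, Fourier inversion of `z ↦ χ(s P(z))` turns the inner sum into
`q⁻ᵈ ∑ₘ Ŝ(m) Ê(m) F̂(-m)`, where `Ŝ(m) = ∑_w χ(s P(w) - w·m)` and `Ê(m) = ∑_{x ∈ E} χ(x·m)`.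
The hypothesis bounds `|Ŝ(m)|` by `A q^{d/2}`, and Cauchy–Schwarz with Plancherel bounds
`∑ₘ |Ê(m) F̂(-m)|` by `q^d |G|^{1/2}`. Hence `q N ≤ |G|² + A² q^{d+1} |G|`, which is at most
`2 |G|²` once `|G| ≥ A² q^{d+1}`, and then `|Δ| ≥ q / 2`.
-/

open Finset

section Collisions

variable {α β : Type*} [DecidableEq β]

def collisionPairs (s : Finset α) (f : α → β) : Finset (α × α) :=
  {pq ∈ s ×ˢ s | f pq.1 = f pq.2}

lemma card_collisionPairs_of_injective (s : Finset α) {f : α → β} (hf : Function.Injective f) :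
    #(collisionPairs s f) = #s := by
  classical
  rw [collisionPairs, ← s.diag_card, diag_eq_filter]
  simp_rw [hf.eq_iff]

lemma card_sq_le_card_image_mul_card_collisionPairs (s : Finset α) (f : α → β) :
    #s ^ 2 ≤ #(s.image f) * #(collisionPairs s f) := by
  have hfiber : ∀ b, #{pq ∈ collisionPairs s f | f pq.1 = b} = #{a ∈ s | f a = b} ^ 2 := by
    intro b
    rw [sq, ← card_product]
    congr 1
    ext ⟨a, a'⟩
    simp only [collisionPairs, mem_filter, mem_product]
    constructor
    · rintro ⟨⟨⟨ha, ha'⟩, h⟩, rfl⟩; exact ⟨⟨ha, rfl⟩, ha', h.symm⟩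
    · rintro ⟨⟨ha, rfl⟩, ha', h⟩; exact ⟨⟨⟨ha, ha'⟩, h.symm⟩, rfl⟩
  calc #s ^ 2 = (∑ b ∈ s.image f, #{a ∈ s | f a = b}) ^ 2 := by rw [← card_eq_sum_card_image]
    _ ≤ #(s.image f) * ∑ b ∈ s.image f, #{a ∈ s | f a = b} ^ 2 := sq_sum_le_card_mul_sum_sq
    _ = #(s.image f) * #(collisionPairs s f) := by
      simp_rw [← hfiber]
      rw [← card_eq_sum_card_fiberwise]
      intro pq hpq
      exact mem_image_of_mem f (mem_product.1 (mem_filter.1 hpq).1).1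

end Collisions

section DualFamily

variable {V M : Type*} [AddCommGroup V] [Fintype V] [DecidableEq V] [Fintype M]

/-- The orthogonality relation that holds exactly when `m ↦ ψ m` is a bijection from `M` onto the
dual group `AddChar V ℂ`. -/
def IsDualFamily (ψ : M → AddChar V ℂ) : Prop :=
  ∀ z, ∑ m, ψ m z = if z = 0 then (Fintype.card V : ℂ) else 0

namespace IsDualFamily

variable {ψ : M → AddChar V ℂ}

lemma sum_norm_sq_sum (hψ : IsDualFamily ψ) {α : Type*} (s : Finset α) (f : α → V) :
    ∑ m, ‖∑ a ∈ s, ψ m (f a)‖ ^ 2 = Fintype.card V * #(collisionPairs s f) := by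
  have hexpand : ∀ m, (‖∑ a ∈ s, ψ m (f a)‖ : ℂ) ^ 2 = ∑ a ∈ s, ∑ b ∈ s, ψ m (f a - f b) := by
    intro m
    rw [← Complex.mul_conj', map_sum, sum_mul_sum]
    refine sum_congr rfl fun a _ => sum_congr rfl fun b _ => ?_
    rw [← AddChar.map_neg_eq_conj, ← AddChar.map_add_eq_mul, sub_eq_add_neg]
  have hcount : ∑ a ∈ s, ∑ b ∈ s, (if f a - f b = 0 then (Fintype.card V : ℂ) else 0)
      = Fintype.card V * #(collisionPairs s f) := by
    simp_rw [sub_eq_zero]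
    rw [collisionPairs, card_filter, sum_product]
    push_cast
    simp only [mul_sum, mul_ite, mul_one, mul_zero]
  have hC : ((∑ m, ‖∑ a ∈ s, ψ m (f a)‖ ^ 2 : ℝ) : ℂ) = Fintype.card V * #(collisionPairs s f) :=
    calc _ = ∑ m, ∑ a ∈ s, ∑ b ∈ s, ψ m (f a - f b) := by push_cast; simp_rw [hexpand]
      _ = ∑ a ∈ s, ∑ b ∈ s, ∑ m, ψ m (f a - f b) := by
        rw [sum_comm]; exact sum_congr rfl fun a _ => sum_comm
      _ = _ := by simp_rw [hψ _]; exact hcount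
  exact_mod_cast hC

lemma sum_norm_sq_sum_of_injective (hψ : IsDualFamily ψ) {α : Type*} (s : Finset α) {f : α → V}
    (hf : Function.Injective f) : ∑ m, ‖∑ a ∈ s, ψ m (f a)‖ ^ 2 = Fintype.card V * #s := by
  rw [hψ.sum_norm_sq_sum, card_collisionPairs_of_injective s hf]

lemma card_mul_eq_sum_fourier (hψ : IsDualFamily ψ) (g : V → ℂ) (z : V) :
    Fintype.card V * g z = ∑ m, (∑ w, g w * ψ m (-w)) * ψ m z := by
  simp_rw [sum_mul, mul_assoc, ← AddChar.map_add_eq_mul]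
  rw [sum_comm]
  simp_rw [← mul_sum, neg_add_eq_sub]
  simp_rw [hψ _, sub_eq_zero, mul_ite, mul_zero]
  rw [sum_ite_eq, if_pos (mem_univ z), mul_comm]

lemma nonempty (hψ : IsDualFamily ψ) : Nonempty M := by
  have h := hψ 0
  rw [if_pos rfl] at h
  obtain ⟨m, -, -⟩ := exists_ne_zero_of_sum_ne_zero (h ▸ Nat.cast_ne_zero.2 Fintype.card_ne_zero)
  exact ⟨m⟩

lemma card_mul_sum_sum_sub_eq (hψ : IsDualFamily ψ) (g : V → ℂ) (E F : Finset V) :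
    Fintype.card V * ∑ x ∈ E, ∑ y ∈ F, g (x - y) =
      ∑ m, (∑ w, g w * ψ m (-w)) * ((∑ x ∈ E, ψ m x) * ∑ y ∈ F, ψ m (-y)) := by
  conv_lhs =>
    simp only [mul_sum, hψ.card_mul_eq_sum_fourier g, sub_eq_add_neg, AddChar.map_add_eq_mul]
  simp_rw [sum_mul_sum (s := E), mul_sum]
  exact (sum_congr rfl fun x _ => sum_comm).trans sum_comm

lemma sum_norm_mul_norm_le (hψ : IsDualFamily ψ) (E F : Finset V) :
    ∑ m, ‖∑ x ∈ E, ψ m x‖ * ‖∑ y ∈ F, ψ m (-y)‖ ≤ Fintype.card V * √(#E * #F) := by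
  refine (Real.sum_mul_le_sqrt_mul_sqrt univ _ _).trans_eq ?_
  rw [hψ.sum_norm_sq_sum_of_injective E (f := fun x => x) Function.injective_id,
    hψ.sum_norm_sq_sum_of_injective F neg_injective, ← Real.sqrt_mul (by positivity),
    show (Fintype.card V * #E : ℝ) * (Fintype.card V * #F) = Fintype.card V ^ 2 * (#E * #F) by ring,
    Real.sqrt_mul (by positivity), Real.sqrt_sq (by positivity)]

lemma norm_sum_sum_sub_le (hψ : IsDualFamily ψ) (g : V → ℂ) {B : ℝ}
    (hg : ∀ m, ‖∑ w, g w * ψ m (-w)‖ ≤ B) (E F : Finset V) :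
    ‖∑ x ∈ E, ∑ y ∈ F, g (x - y)‖ ≤ B * √(#E * #F) := by
  have hB : 0 ≤ B := (norm_nonneg _).trans (hg hψ.nonempty.some)
  refine le_of_mul_le_mul_left ?_ (Nat.cast_pos.2 Fintype.card_pos : (0 : ℝ) < Fintype.card V)
  calc (Fintype.card V : ℝ) * ‖∑ x ∈ E, ∑ y ∈ F, g (x - y)‖
      = ‖∑ m, (∑ w, g w * ψ m (-w)) * ((∑ x ∈ E, ψ m x) * ∑ y ∈ F, ψ m (-y))‖ := by
        rw [← hψ.card_mul_sum_sum_sub_eq, norm_mul, Complex.norm_natCast]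
    _ ≤ ∑ m, ‖∑ w, g w * ψ m (-w)‖ * (‖∑ x ∈ E, ψ m x‖ * ‖∑ y ∈ F, ψ m (-y)‖) :=
        (norm_sum_le _ _).trans_eq (by simp_rw [norm_mul])
    _ ≤ ∑ m, B * (‖∑ x ∈ E, ψ m x‖ * ‖∑ y ∈ F, ψ m (-y)‖) :=
        sum_le_sum fun m _ => mul_le_mul_of_nonneg_right (hg m) (by positivity)
    _ ≤ B * (Fintype.card V * √(#E * #F)) := by
        rw [← mul_sum]; exact mul_le_mul_of_nonneg_left (hψ.sum_norm_mul_norm_le E F) hB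
    _ = Fintype.card V * (B * √(#E * #F)) := by ring

end IsDualFamily

end DualFamily

section DotChar

variable {R ι : Type*} [Semiring R] [Fintype ι]

def dotChar (χ : AddChar R ℂ) (m : ι → R) : AddChar (ι → R) ℂ where
  toFun x := χ (x ⬝ᵥ m)
  map_zero_eq_one' := by rw [zero_dotProduct, AddChar.map_zero_eq_one]
  map_add_eq_mul' x y := by rw [add_dotProduct, AddChar.map_add_eq_mul]

lemma dotChar_apply (χ : AddChar R ℂ) (m x : ι → R) : dotChar χ m x = χ (x ⬝ᵥ m) := rfl

end DotChar

section FiniteField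

variable {K : Type*} [Field K] [Fintype K] [DecidableEq K] {χ : AddChar K ℂ}

lemma isDualFamily_mulShift (hχ : χ ≠ 1) : IsDualFamily χ.mulShift := fun z => by
  simpa only [AddChar.mulShift_apply, Nat.cast_ite, Nat.cast_zero] using
    AddChar.sum_mulShift z (AddChar.IsPrimitive.of_ne_one hχ)

lemma isDualFamily_dotChar {ι : Type*} [Fintype ι] [DecidableEq ι] (hχ : χ ≠ 1) :
    IsDualFamily (dotChar χ : (ι → K) → AddChar (ι → K) ℂ) := by
  intro z
  split_ifs with hz
  · simp [hz]
  · obtain ⟨i, hi⟩ := Function.ne_iff.1 hz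
    obtain ⟨a, ha⟩ := AddChar.ne_one_iff.1 hχ
    have hne : dotChar χ z ≠ 1 := AddChar.ne_one_iff.2
      ⟨Pi.single i (a / z i), by rwa [dotChar_apply, single_dotProduct, div_mul_cancel₀ a hi]⟩
    rw [← AddChar.sum_eq_zero_of_ne_one hne]
    simp only [dotChar_apply, dotProduct_comm]

end FiniteField

section DistanceSet

variable {V M K : Type*} [AddCommGroup V] [Fintype V] [DecidableEq V] [Fintype M]
  {ψ : M → AddChar V ℂ} [Field K] [Fintype K] [DecidableEq K] {χ : AddChar K ℂ}
  {φ : V → K} {B : ℝ}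

lemma sum_norm_sq_sum_mulShift_le (hψ : IsDualFamily ψ)
    (hφ : ∀ s ≠ 0, ∀ m, ‖∑ w, χ (s * φ w) * ψ m (-w)‖ ≤ B) (E F : Finset V) :
    ∑ s, ‖∑ p ∈ E ×ˢ F, χ.mulShift s (φ (p.1 - p.2))‖ ^ 2 ≤
      (#E * #F) ^ 2 + Fintype.card K * (B ^ 2 * (#E * #F)) := by
  have hzero : ‖∑ p ∈ E ×ˢ F, χ.mulShift 0 (φ (p.1 - p.2))‖ ^ 2 = (#E * #F : ℝ) ^ 2 := by
    simp [AddChar.mulShift_zero, card_product]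
  have hnonzero : ∀ s ∈ univ.erase (0 : K),
      ‖∑ p ∈ E ×ˢ F, χ.mulShift s (φ (p.1 - p.2))‖ ^ 2 ≤ B ^ 2 * (#E * #F) := by
    intro s hs
    rw [sum_product]
    calc _ ≤ (B * √(#E * #F)) ^ 2 := pow_le_pow_left₀ (norm_nonneg _)
          (hψ.norm_sum_sum_sub_le _ (hφ s (ne_of_mem_erase hs)) E F) 2
      _ = B ^ 2 * (#E * #F) := by rw [mul_pow, Real.sq_sqrt (by positivity)]
  have hcard : (#(univ.erase (0 : K)) : ℝ) ≤ Fintype.card K := by exact_mod_cast card_erase_le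
  rw [← add_sum_erase _ _ (mem_univ 0), hzero]
  grw [sum_le_sum hnonzero, sum_const, nsmul_eq_mul, hcard]

theorem card_mul_le_card_image_mul (hψ : IsDualFamily ψ) (hχ : χ ≠ 1)
    (hφ : ∀ s ≠ 0, ∀ m, ‖∑ w, χ (s * φ w) * ψ m (-w)‖ ≤ B) (E F : Finset V) :
    Fintype.card K * (#E * #F : ℝ) ≤
      #((E ×ˢ F).image fun p => φ (p.1 - p.2)) * (#E * #F + Fintype.card K * B ^ 2) := by
  set q : ℝ := (Fintype.card K : ℝ)
  set Δ := (E ×ˢ F).image fun p => φ (p.1 - p.2)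
  set N : ℝ := (#(collisionPairs (E ×ˢ F) fun p => φ (p.1 - p.2)) : ℝ) with hN
  have hCS : (#E * #F : ℝ) ^ 2 ≤ #Δ * N := by
    rw [hN, ← Nat.cast_mul, ← card_product]
    exact_mod_cast card_sq_le_card_image_mul_card_collisionPairs (E ×ˢ F) fun p => φ (p.1 - p.2)
  have henergy : q * N = ∑ s, ‖∑ p ∈ E ×ˢ F, χ.mulShift s (φ (p.1 - p.2))‖ ^ 2 :=
    ((isDualFamily_mulShift hχ).sum_norm_sq_sum (E ×ˢ F) _).symm
  rcases (by positivity : (0 : ℝ) ≤ #E * #F).eq_or_lt with hG | hG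
  · rw [← hG, mul_zero]
    positivity
  refine le_of_mul_le_mul_right ?_ hG
  calc q * (#E * #F) * (#E * #F) = q * (#E * #F) ^ 2 := by ring
    _ ≤ q * (#Δ * N) := by gcongr
    _ = #Δ * (q * N) := by ring
    _ ≤ #Δ * ((#E * #F) ^ 2 + q * (B ^ 2 * (#E * #F))) := by
        rw [henergy]; gcongr; exact sum_norm_sq_sum_mulShift_le hψ hφ E F
    _ = #Δ * (#E * #F + q * B ^ 2) * (#E * #F) := by ring

end DistanceSet

theorem stmt5_general (d : ℕ) (A : ℝ) (hA : 0 < A) :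
    ∃ C : ℝ, 0 < C ∧ ∃ c : ℝ, 0 < c ∧
      ∀ (K : Type) [Field K] [Fintype K] [DecidableEq K]
        (χ : AddChar K ℂ), χ ≠ 1 →
        ∀ P : MvPolynomial (Fin d) K,
          (∀ m : Fin d → K, ∀ s : K, s ≠ 0 →
            ‖(∑ x : Fin d → K,
                χ (s * MvPolynomial.eval x P + ∑ i, x i * m i))‖ ≤
              A * (Fintype.card K : ℝ) ^ ((d : ℝ) / 2)) →
          ∀ E F : Finset (Fin d → K),
            C * (Fintype.card K : ℝ) ^ (d + 1) ≤ (E.card : ℝ) * (F.card : ℝ) →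
            c * (Fintype.card K : ℝ) ≤
              (((E ×ˢ F).image
                (fun p => MvPolynomial.eval (p.1 - p.2) P)).card : ℝ) := by
  refine ⟨A ^ 2, by positivity, 1 / 2, by norm_num, ?_⟩
  intro K _ _ _ χ hχ P hP E F hEF
  have hq : 0 < (Fintype.card K : ℝ) := Nat.cast_pos.2 Fintype.card_pos
  have hφ : ∀ s ≠ 0, ∀ m, ‖∑ w, χ (s * MvPolynomial.eval w P) * dotChar χ m (-w)‖ ≤
      A * (Fintype.card K : ℝ) ^ ((d : ℝ) / 2) := fun s hs m => by
    simpa only [dotChar_apply, ← AddChar.map_add_eq_mul, dotProduct, Pi.neg_apply, neg_mul,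
      mul_neg, sum_neg_distrib] using hP (-m) s hs
  have hB : (Fintype.card K : ℝ) * (A * (Fintype.card K : ℝ) ^ ((d : ℝ) / 2)) ^ 2 =
      A ^ 2 * (Fintype.card K : ℝ) ^ (d + 1) := by
    rw [mul_pow, ← Real.rpow_mul_natCast hq.le, Nat.cast_ofNat, div_mul_cancel₀ _ two_ne_zero,
      Real.rpow_natCast]
    ring
  have hbound := card_mul_le_card_image_mul (isDualFamily_dotChar hχ) hχ hφ E F
  rw [hB] at hbound
  have hG : 0 < (#E * #F : ℝ) := (by positivity : (0 : ℝ) < A ^ 2 * _).trans_le hEF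
  have hq_le : (Fintype.card K : ℝ) * (#E * #F) ≤ (2 * #((E ×ˢ F).image fun p =>
      MvPolynomial.eval (p.1 - p.2) P)) * (#E * #F) := by
    grw [hbound, hEF]
    linarith
  linarith [le_of_mul_le_mul_right hq_le hG]

/-- Simple Falconer distance formula. If
`|∑_x χ(sP(x) + m·x)| ≤ A q^{d/2}` for all `m` and all `s ≠ 0`, then
`|E||F| ≥ C q^{d+1}` implies `|Δ_P(E,F)| ≥ c q`. -/
theorem stmt5 (d : ℕ) (hd : 1 ≤ d) (A : ℝ) (hA : 0 < A) :
    ∃ C : ℝ, 0 < C ∧ ∃ c : ℝ, 0 < c ∧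
      ∀ (K : Type) [Field K] [Fintype K] [DecidableEq K]
        (χ : AddChar K ℂ), χ ≠ 1 →
        ∀ P : MvPolynomial (Fin d) K,
          (∀ m : Fin d → K, ∀ s : K, s ≠ 0 →
            ‖(∑ x : Fin d → K,
                χ (s * MvPolynomial.eval x P + ∑ i, x i * m i))‖ ≤
              A * (Fintype.card K : ℝ) ^ ((d : ℝ) / 2)) →
          ∀ E F : Finset (Fin d → K),
            C * (Fintype.card K : ℝ) ^ (d + 1) ≤ (E.card : ℝ) * (F.card : ℝ) →
            c * (Fintype.card K : ℝ) ≤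
              (((E ×ˢ F).image
                (fun p => MvPolynomial.eval (p.1 - p.2) P)).card : ℝ) :=
  stmt5_general d A hA
end

section
/- Fix an integer d ≥ 1 and a constant A > 0. There exist constants C > 0 and c > 0 depending only on d and A with the following property. Let F_q be a finite field with q elements, χ : F_q → ℂ a nontrivial additive character, and P ∈ F_q[x_1,…,x_d] a polynomial of degree ≥ 2 such that for every m ∈ F_q^d and every s ∈ F_q \ {0}, |∑_{x ∈ F_q^d} χ( s·P(x) + m·x )| ≤ A q^{d/2}. Define H ∈ F_q[x_1,…,x_d,x_{d+1}] by H(x, x_{d+1}) = P(x) − x_{d+1}. Then for all product sets E* = E × E_{d+1} and F* = F × F_{d+1} in F_q^d × F_q (with E, F ⊆ F_q^d and E_{d+1}, F_{d+1} ⊆ F_q nonempty) satisfying |E*|·|F*| / |F_{d+1}| ≥ C q^{d+1}, the distance set satisfies |Δ_H(E*, F*)| ≥ c q. -/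
/-!
Let `ν(t)` count the pairs `(x*, y*) ∈ E* × F*` with `H(x* - y*) = t`. By Cauchy–Schwarz,
`|E*|² |F*|² ≤ |Δ| · Σ_t ν(t)²`, and by Parseval `q Σ_t ν(t)² = Σ_s |ν̂(s)|²`, whose `s = 0` term is
`|E*|² |F*|²`. Since `H(x* - y*) = P(x - y) - x_{d+1} + y_{d+1}`, for `s ≠ 0` the transform `ν̂(s)`
factors into a sum over `E × F`, one over `E_{d+1}` and one over `F_{d+1}`. Fourier expansion of
`z ↦ χ(s P(z))` and the hypothesis on `P` bound the first by `A q^{d/2} √(|E||F|)`, the last one is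
trivially at most `|F_{d+1}|`, and Parseval in the variable `s` sums the squares of the middle one
to `q |E_{d+1}|`. Under the size condition with `C = A²` the terms with `s ≠ 0` contribute at
most the `s = 0` term, so `|Δ| ≥ q / 2`.
-/

open Finset Matrix ComplexConjugate

namespace AddChar

lemma map_sum_eq_prod {A M : Type*} [AddCommMonoid A] [CommMonoid M] (ψ : AddChar A M)
    {ι : Type*} (s : Finset ι) (f : ι → A) : ψ (∑ i ∈ s, f i) = ∏ i ∈ s, ψ (f i) := by
  classical
  induction s using Finset.induction_on with
  | empty => simp
  | insert i s hi ih => rw [sum_insert hi, prod_insert hi, map_add_eq_mul, ih]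

section Orthogonality

variable {R M : Type*} [CommRing R] [Fintype R] [DecidableEq R] [CommRing M] [IsDomain M]
  {ψ : AddChar R M}

lemma sum_apply_dotProduct_eq_ite (hψ : ψ.IsPrimitive) {ι : Type*} [Fintype ι] [DecidableEq ι]
    (x : ι → R) :
    ∑ m : ι → R, ψ (x ⬝ᵥ m) = if x = 0 then (Fintype.card R : M) ^ Fintype.card ι else 0 := by
  simp_rw [dotProduct, map_sum_eq_prod]
  rw [← Fintype.prod_sum (fun i t => ψ (x i * t))]
  simp_rw [mul_comm (x _), sum_mulShift _ hψ, Nat.cast_ite, Nat.cast_zero, Fintype.prod_ite_zero,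
    prod_const, card_univ, funext_iff, Pi.zero_apply]

end Orthogonality

theorem sum_norm_sq_sum_mul_eq {G ι : Type*} [AddCommGroup G] [Finite G] [DecidableEq G]
    [Fintype ι] (ψ : ι → AddChar G ℂ) (M : ℝ) (hψ : ∀ g, ∑ i, ψ i g = if g = 0 then (M : ℂ) else 0)
    (T : Finset G) (f : G → ℂ) :
    ∑ i, ‖∑ g ∈ T, f g * ψ i g‖ ^ 2 = M * ∑ g ∈ T, ‖f g‖ ^ 2 := by
  have hpair : ∀ i g h, ψ i g * conj (ψ i h) = ψ i (g - h) := by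
    intro i g h
    rw [← map_neg_eq_conj, ← map_add_eq_mul, sub_eq_add_neg]
  apply Complex.ofReal_injective
  push_cast
  simp_rw [← Complex.mul_conj', map_sum, map_mul, sum_mul_sum]
  calc ∑ i, ∑ g ∈ T, ∑ h ∈ T, f g * ψ i g * (conj (f h) * conj (ψ i h))
      = ∑ g ∈ T, ∑ h ∈ T, f g * conj (f h) * ∑ i, ψ i (g - h) := by
        rw [sum_comm]
        refine sum_congr rfl fun g _ => ?_
        rw [sum_comm]
        refine sum_congr rfl fun h _ => ?_
        rw [mul_sum]
        refine sum_congr rfl fun i _ => ?_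
        rw [← hpair]; ring
    _ = M * ∑ g ∈ T, f g * conj (f g) := by
        simp_rw [hψ, sub_eq_zero, mul_ite, mul_zero, sum_ite_eq, mul_sum]
        refine sum_congr rfl fun g hg => ?_
        rw [if_pos hg]; ring

def dotProductChar {R M : Type*} [CommRing R] [CommMonoid M] (χ : AddChar R M) {ι : Type*}
    [Fintype ι] (m : ι → R) : AddChar (ι → R) M :=
  χ.compAddMonoidHom (AddMonoidHom.mk' (· ⬝ᵥ m) fun x y => add_dotProduct x y m)

section FourierAnalysis

variable {R : Type*} [CommRing R] [Fintype R] [DecidableEq R] {χ : AddChar R ℂ}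

lemma sum_norm_sq_sum_apply_dotProduct (hχ : χ.IsPrimitive) {ι : Type*} [Fintype ι]
    [DecidableEq ι] (T : Finset (ι → R)) :
    ∑ m : ι → R, ‖∑ x ∈ T, χ (x ⬝ᵥ m)‖ ^ 2 = (Fintype.card R : ℝ) ^ Fintype.card ι * #T := by
  have hortho (x : ι → R) : ∑ m, dotProductChar χ m x =
      if x = 0 then (((Fintype.card R : ℝ) ^ Fintype.card ι : ℝ) : ℂ) else 0 := by
    push_cast
    exact sum_apply_dotProduct_eq_ite hχ x
  simpa [dotProductChar] using sum_norm_sq_sum_mul_eq (dotProductChar χ) _ hortho T 1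

lemma sum_norm_sq_sum_mul_apply_mul (hχ : χ.IsPrimitive) (T : Finset R) (f : R → ℂ) :
    ∑ s : R, ‖∑ t ∈ T, f t * χ (s * t)‖ ^ 2 = Fintype.card R * ∑ t ∈ T, ‖f t‖ ^ 2 := by
  have hortho (t : R) : ∑ s, χ.mulShift s t = if t = 0 then ((Fintype.card R : ℝ) : ℂ) else 0 := by
    simpa [mul_comm] using sum_mulShift t hχ
  simpa using sum_norm_sq_sum_mul_eq χ.mulShift _ hortho T f

variable {ι : Type*} [Fintype ι] [DecidableEq ι]

lemma sum_fourier_mul_apply_neg_dotProduct (hχ : χ.IsPrimitive) (g : (ι → R) → ℂ) (z : ι → R) :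
    ∑ m, (∑ w, g w * χ (w ⬝ᵥ m)) * χ (-(z ⬝ᵥ m)) =
      (Fintype.card R : ℂ) ^ Fintype.card ι * g z := by
  simp_rw [sum_mul, mul_assoc, ← map_add_eq_mul, ← sub_eq_add_neg, ← sub_dotProduct]
  rw [sum_comm]
  simp_rw [← mul_sum, sum_apply_dotProduct_eq_ite hχ, sub_eq_zero, mul_ite, mul_zero,
    sum_ite_eq', mem_univ, if_true]
  ring

lemma card_pow_mul_sum_sum_sub (hχ : χ.IsPrimitive) (g : (ι → R) → ℂ) (E F : Finset (ι → R)) :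
    (Fintype.card R : ℂ) ^ Fintype.card ι * ∑ x ∈ E, ∑ y ∈ F, g (x - y) =
      ∑ m, (∑ w, g w * χ (w ⬝ᵥ m)) * conj (∑ x ∈ E, χ (x ⬝ᵥ m)) * ∑ y ∈ F, χ (y ⬝ᵥ m) := by
  have hsplit (m x y : ι → R) : χ (-((x - y) ⬝ᵥ m)) = conj (χ (x ⬝ᵥ m)) * χ (y ⬝ᵥ m) := by
    rw [sub_dotProduct, neg_sub, sub_eq_add_neg, map_add_eq_mul, map_neg_eq_conj, mul_comm]
  calc (Fintype.card R : ℂ) ^ Fintype.card ι * ∑ x ∈ E, ∑ y ∈ F, g (x - y)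
      = ∑ x ∈ E, ∑ y ∈ F, ∑ m, (∑ w, g w * χ (w ⬝ᵥ m)) * χ (-((x - y) ⬝ᵥ m)) := by
        simp_rw [mul_sum, sum_fourier_mul_apply_neg_dotProduct hχ]
    _ = ∑ m, (∑ w, g w * χ (w ⬝ᵥ m)) * ∑ x ∈ E, ∑ y ∈ F, conj (χ (x ⬝ᵥ m)) * χ (y ⬝ᵥ m) := by
        simp_rw [hsplit, mul_sum]
        exact (sum_congr rfl fun x _ => sum_comm).trans sum_comm
    _ = _ := by simp_rw [mul_assoc, map_sum, sum_mul_sum]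

lemma norm_sq_sum_sum_sub_le (hχ : χ.IsPrimitive) (g : (ι → R) → ℂ) {B : ℝ}
    (hg : ∀ m, ‖∑ w, g w * χ (w ⬝ᵥ m)‖ ≤ B) (E F : Finset (ι → R)) :
    ‖∑ x ∈ E, ∑ y ∈ F, g (x - y)‖ ^ 2 ≤ B ^ 2 * #E * #F := by
  set Q : ℝ := (Fintype.card R : ℝ) ^ Fintype.card ι
  have hQ : 0 < Q := by positivity
  have hnorm : Q * ‖∑ x ∈ E, ∑ y ∈ F, g (x - y)‖ ≤
      B * ∑ m, ‖∑ x ∈ E, χ (x ⬝ᵥ m)‖ * ‖∑ y ∈ F, χ (y ⬝ᵥ m)‖ := by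
    have h := congrArg norm (card_pow_mul_sum_sum_sub hχ g E F)
    rw [norm_mul, norm_pow, Complex.norm_natCast] at h
    rw [h, mul_sum]
    refine (norm_sum_le _ _).trans (sum_le_sum fun m _ => ?_)
    rw [norm_mul, norm_mul, Complex.norm_conj, mul_assoc]
    gcongr
    exact hg m
  have hcs : (∑ m, ‖∑ x ∈ E, χ (x ⬝ᵥ m)‖ * ‖∑ y ∈ F, χ (y ⬝ᵥ m)‖) ^ 2 ≤ (Q * #E) * (Q * #F) := by
    rw [← sum_norm_sq_sum_apply_dotProduct hχ, ← sum_norm_sq_sum_apply_dotProduct hχ]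
    exact sum_mul_sq_le_sq_mul_sq _ _ _
  have hsq : Q ^ 2 * ‖∑ x ∈ E, ∑ y ∈ F, g (x - y)‖ ^ 2 ≤ Q ^ 2 * (B ^ 2 * #E * #F) :=
    calc Q ^ 2 * ‖∑ x ∈ E, ∑ y ∈ F, g (x - y)‖ ^ 2
        = (Q * ‖∑ x ∈ E, ∑ y ∈ F, g (x - y)‖) ^ 2 := by ring
      _ ≤ B ^ 2 * (∑ m, ‖∑ x ∈ E, χ (x ⬝ᵥ m)‖ * ‖∑ y ∈ F, χ (y ⬝ᵥ m)‖) ^ 2 := by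
        rw [← mul_pow]; exact pow_le_pow_left₀ (by positivity) hnorm 2
      _ ≤ B ^ 2 * ((Q * #E) * (Q * #F)) := by gcongr
      _ = Q ^ 2 * (B ^ 2 * #E * #F) := by ring
  exact le_of_mul_le_mul_left hsq (by positivity)
end FourierAnalysis

section DistanceSets

variable {R : Type*} [CommRing R] [Fintype R] {χ : AddChar R ℂ}

theorem card_le_two_mul_card_image [DecidableEq R] (hχ : χ.IsPrimitive) {α : Type*} {S : Finset α}
    (hS : S.Nonempty) (v : α → R)
    (htail : ∑ s ∈ univ.erase 0, ‖∑ p ∈ S, χ (s * v p)‖ ^ 2 ≤ #S ^ 2) :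
    (Fintype.card R : ℝ) ≤ 2 * #(S.image v) := by
  set fiber : R → ℕ := fun t => #{p ∈ S | v p = t}
  have hfiber (s : R) : ∑ p ∈ S, χ (s * v p) = ∑ t ∈ S.image v, (fiber t : ℂ) * χ (s * t) := by
    rw [sum_comp (fun t => χ (s * t)) v]
    simp only [nsmul_eq_mul, fiber]
  have henergy : ∑ s, ‖∑ p ∈ S, χ (s * v p)‖ ^ 2 =
      Fintype.card R * ∑ t ∈ S.image v, (fiber t : ℝ) ^ 2 := by
    simp_rw [hfiber, sum_norm_sq_sum_mul_apply_mul hχ, Complex.norm_natCast]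
  have hzero : ∑ s, ‖∑ p ∈ S, χ (s * v p)‖ ^ 2 =
      #S ^ 2 + ∑ s ∈ univ.erase 0, ‖∑ p ∈ S, χ (s * v p)‖ ^ 2 := by
    rw [← add_sum_erase _ _ (mem_univ 0)]
    simp
  have hcs : (#S : ℝ) ^ 2 ≤ #(S.image v) * ∑ t ∈ S.image v, (fiber t : ℝ) ^ 2 := by
    rw [card_eq_sum_card_image v S]
    push_cast
    exact sq_sum_le_card_mul_sum_sq
  have hmain : Fintype.card R * (#S : ℝ) ^ 2 ≤ 2 * #(S.image v) * #S ^ 2 :=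
    calc Fintype.card R * (#S : ℝ) ^ 2
        ≤ Fintype.card R * (#(S.image v) * ∑ t ∈ S.image v, (fiber t : ℝ) ^ 2) := by gcongr
      _ = #(S.image v) * (#S ^ 2 + ∑ s ∈ univ.erase 0, ‖∑ p ∈ S, χ (s * v p)‖ ^ 2) := by
        rw [← hzero, henergy]; ring
      _ ≤ #(S.image v) * (#S ^ 2 + #S ^ 2) := by gcongr
      _ = 2 * #(S.image v) * #S ^ 2 := by ring
  exact le_of_mul_le_mul_right hmain (by positivity)
lemma sum_product_apply_mul_sub_sub {V W : Type*} (D : V → W → R) (E : Finset V)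
    (F : Finset W) (Ed Fd : Finset R) (s : R) :
    ∑ p ∈ (E ×ˢ Ed) ×ˢ (F ×ˢ Fd), χ (s * (D p.1.1 p.2.1 - (p.1.2 - p.2.2))) =
      (∑ x ∈ E, ∑ y ∈ F, χ (s * D x y)) * conj (∑ e ∈ Ed, χ (s * e)) *
        ∑ f ∈ Fd, χ (s * f) := by
  have hsplit (x : V) (e : R) (y : W) (f : R) :
      χ (s * (D x y - (e - f))) = χ (s * D x y) * conj (χ (s * e)) * χ (s * f) := by
    rw [← map_neg_eq_conj, ← map_add_eq_mul, ← map_add_eq_mul]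
    ring_nf
  simp only [sum_product, hsplit]
  rw [map_sum, sum_mul_sum]
  simp only [sum_mul]
  simp only [mul_sum]

theorem card_le_two_mul_card_image_sub_sub [DecidableEq R] {V W : Type*} (hχ : χ.IsPrimitive)
    (D : V → W → R) (E : Finset V) (F : Finset W) (Ed Fd : Finset R) (hFd : Fd.Nonempty)
    {B : ℝ} (hB : 0 < B)
    (hD : ∀ s ≠ 0, ‖∑ x ∈ E, ∑ y ∈ F, χ (s * D x y)‖ ^ 2 ≤ B * #E * #F)
    (hsize : B * Fintype.card R ≤ #E * #Ed * #F) :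
    (Fintype.card R : ℝ) ≤
      2 * #(((E ×ˢ Ed) ×ˢ (F ×ˢ Fd)).image fun p => D p.1.1 p.2.1 - (p.1.2 - p.2.2)) := by
  have hpos : (0 : ℝ) < #E * #Ed * #F := lt_of_lt_of_le (by positivity) hsize
  have hcard : (#((E ×ˢ Ed) ×ˢ (F ×ˢ Fd)) : ℝ) = #E * #Ed * #F * #Fd := by
    simp only [card_product]; push_cast; ring
  have hS : ((E ×ˢ Ed) ×ˢ (F ×ˢ Fd)).Nonempty := by
    rw [← card_pos, ← Nat.cast_pos (α := ℝ), hcard]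
    have := hFd.card_pos
    positivity
  refine card_le_two_mul_card_image hχ hS _ ?_
  have hFd_norm (s : R) : ‖∑ f ∈ Fd, χ (s * f)‖ ≤ #Fd :=
    (norm_sum_le _ _).trans (by simp)
  calc _
      ≤ ∑ s ∈ univ.erase 0, B * #E * #F * #Fd ^ 2 * ‖∑ e ∈ Ed, χ (s * e)‖ ^ 2 := by
        refine sum_le_sum fun s hs => ?_
        have hDs := hD s (ne_of_mem_erase hs)
        have hFds := hFd_norm s
        rw [sum_product_apply_mul_sub_sub, norm_mul, norm_mul, Complex.norm_conj]
        calc _ = ‖∑ x ∈ E, ∑ y ∈ F, χ (s * D x y)‖ ^ 2 * ‖∑ f ∈ Fd, χ (s * f)‖ ^ 2 *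
              ‖∑ e ∈ Ed, χ (s * e)‖ ^ 2 := by ring
          _ ≤ _ := by gcongr
    _ ≤ ∑ s, B * #E * #F * #Fd ^ 2 * ‖∑ e ∈ Ed, χ (s * e)‖ ^ 2 :=
        sum_le_sum_of_subset_of_nonneg (erase_subset _ _) fun _ _ _ => by positivity
    _ = B * Fintype.card R * (#E * #F * #Fd ^ 2 * #Ed) := by
        have hEd : ∑ s, ‖∑ e ∈ Ed, χ (s * e)‖ ^ 2 = Fintype.card R * #Ed := by
          simpa using sum_norm_sq_sum_mul_apply_mul hχ Ed 1
        rw [← mul_sum, hEd]; ring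
    _ ≤ #E * #Ed * #F * (#E * #F * #Fd ^ 2 * #Ed) := by gcongr
    _ = #((E ×ˢ Ed) ×ˢ (F ×ˢ Fd)) ^ 2 := by rw [hcard]; ring

end DistanceSets

end AddChar

theorem stmt7_general (d : ℕ) (A : ℝ) (hA : 0 < A) :
    ∃ C : ℝ, 0 < C ∧ ∃ c : ℝ, 0 < c ∧
      ∀ (K : Type) [Field K] [Fintype K] [DecidableEq K]
        (χ : AddChar K ℂ), χ ≠ 1 →
        ∀ P : MvPolynomial (Fin d) K, 2 ≤ P.totalDegree →
          (∀ m : Fin d → K, ∀ s : K, s ≠ 0 →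
            ‖(∑ x : Fin d → K,
                χ (s * MvPolynomial.eval x P + ∑ i, x i * m i))‖ ≤
              A * (Fintype.card K : ℝ) ^ ((d : ℝ) / 2)) →
          ∀ (E F : Finset (Fin d → K)) (Ed Fd : Finset K),
            Ed.Nonempty → Fd.Nonempty →
            C * (Fintype.card K : ℝ) ^ (d + 1) ≤
              (((E ×ˢ Ed).card : ℝ) * ((F ×ˢ Fd).card : ℝ)) / (Fd.card : ℝ) →
            c * (Fintype.card K : ℝ) ≤
              ((((E ×ˢ Ed) ×ˢ (F ×ˢ Fd)).image
                (fun p =>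
                  MvPolynomial.eval (p.1.1 - p.2.1) P - (p.1.2 - p.2.2))).card : ℝ) := by
  refine ⟨A ^ 2, by positivity, 1 / 2, by norm_num, ?_⟩
  intro K _ _ _ χ hχ P _ hexp E F Ed Fd _ hFd hcond
  have hq : (0 : ℝ) < Fintype.card K := by exact_mod_cast Fintype.card_pos
  have hχ' := AddChar.IsPrimitive.of_ne_one hχ
  have hB : (A * (Fintype.card K : ℝ) ^ ((d : ℝ) / 2)) ^ 2 = A ^ 2 * Fintype.card K ^ d := by
    rw [mul_pow, ← Real.rpow_mul_natCast hq.le]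
    norm_num
  have hD (s : K) (hs : s ≠ 0) : ‖∑ x ∈ E, ∑ y ∈ F, χ (s * MvPolynomial.eval (x - y) P)‖ ^ 2 ≤
      A ^ 2 * Fintype.card K ^ d * #E * #F := by
    rw [← hB]
    exact AddChar.norm_sq_sum_sum_sub_le hχ' (fun z => χ (s * MvPolynomial.eval z P))
      (fun m => by simpa only [AddChar.map_add_eq_mul, dotProduct] using hexp m s hs) E F
  have hsize : A ^ 2 * Fintype.card K ^ d * Fintype.card K ≤ (#E * #Ed * #F : ℝ) := by
    have hFd' : (#Fd : ℝ) ≠ 0 := by exact_mod_cast hFd.card_pos.ne'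
    rw [card_product, card_product, Nat.cast_mul, Nat.cast_mul, mul_div_assoc,
      mul_div_cancel_right₀ _ hFd', pow_succ (Fintype.card K : ℝ)] at hcond
    linarith
  have hΔ := AddChar.card_le_two_mul_card_image_sub_sub hχ' (fun x y => MvPolynomial.eval (x - y) P)
    E F Ed Fd hFd (by positivity) hD hsize
  linarith

/-- Generalized paraboloid distances. Suppose `deg P ≥ 2` and
`|∑_x χ(sP(x) + m·x)| ≤ A q^{d/2}` for all `m` and all `s ≠ 0`. Set
`H(x, x_{d+1}) = P(x) - x_{d+1}`. For product sets `E* = E × E_{d+1}` and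
`F* = F × F_{d+1}` in `K^d × K` with `|E*||F*|/|F_{d+1}| ≥ C q^{d+1}`, the
distance set satisfies `|Δ_H(E*,F*)| ≥ c q`. -/
theorem stmt7 (d : ℕ) (hd : 1 ≤ d) (A : ℝ) (hA : 0 < A) :
    ∃ C : ℝ, 0 < C ∧ ∃ c : ℝ, 0 < c ∧
      ∀ (K : Type) [Field K] [Fintype K] [DecidableEq K]
        (χ : AddChar K ℂ), χ ≠ 1 →
        ∀ P : MvPolynomial (Fin d) K, 2 ≤ P.totalDegree →
          (∀ m : Fin d → K, ∀ s : K, s ≠ 0 →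
            ‖(∑ x : Fin d → K,
                χ (s * MvPolynomial.eval x P + ∑ i, x i * m i))‖ ≤
              A * (Fintype.card K : ℝ) ^ ((d : ℝ) / 2)) →
          ∀ (E F : Finset (Fin d → K)) (Ed Fd : Finset K),
            Ed.Nonempty → Fd.Nonempty →
            C * (Fintype.card K : ℝ) ^ (d + 1) ≤
              (((E ×ˢ Ed).card : ℝ) * ((F ×ˢ Fd).card : ℝ)) / (Fd.card : ℝ) →
            c * (Fintype.card K : ℝ) ≤
              ((((E ×ˢ Ed) ×ˢ (F ×ˢ Fd)).image
                (fun p =>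
                  MvPolynomial.eval (p.1.1 - p.2.1) P - (p.1.2 - p.2.2))).card : ℝ) :=
  stmt7_general d A hA
end

section
/- Fix an odd integer d ≥ 3. There exists a constant C > 0 depending only on d such that for every finite field F_q of odd characteristic, every polynomial P(x) = ∑_{j=1}^d a_j x_j^2 ∈ F_q[x_1,…,x_d] with a_j ≠ 0 for all j, and every nontrivial additive character χ : F_q → ℂ, the varieties V_t = { x ∈ F_q^d : P(x) = t } satisfy |∑_{x ∈ V_t} χ(−x·m)| ≤ C q^{(d−1)/2} for all m ∈ F_q^d \ {0} and ALL t ∈ F_q (including t = 0). -/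
/-!
Detecting the level set `P = t` by additive characters gives
`q S = ∑_s χ(-ts) ∏_j ∑_u χ(s a_j u² - m_j u)`. For `s ≠ 0` each inner sum is a quadratic Gauss sum
`η(s a_j) G χ(-m_j² / (4 s a_j))`, and as `d` is odd, `η(s)^d = η(s)`; the term `s = 0` vanishes
because `m ≠ 0`. Hence, with `B = -∑_j m_j² / (4 a_j)`,
`q S = η(∏ a_j) G^d ∑_s η(s) χ(-ts + B/s)` is, up to a factor of modulus `q^{d/2}`, a Salié sum.
Fourier inversion evaluates the Salié sum `∑_s η(s) χ(αs + b/s)` for `b ≠ 0` as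
`η(b) G ∑_{v² = αb} χ(2v)`, of modulus at most `2√q`; for `b = 0` it is a Gauss sum of modulus at
most `√q`. This gives `|S| ≤ 2 q^{(d-1)/2}`.
-/

open Finset AddChar

lemma AddChar.map_sum_eq_prod_s14 {A M ι : Type*} [AddCommMonoid A] [CommMonoid M]
    (ψ : AddChar A M) (s : Finset ι) (f : ι → A) :
    ψ (∑ i ∈ s, f i) = ∏ i ∈ s, ψ (f i) := by
  classical
  induction s using Finset.induction_on with
  | empty => simp
  | insert i s hi ih => rw [sum_insert hi, prod_insert hi, map_add_eq_mul, ih]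

section Orthogonality

variable {R : Type*} [CommRing R] [Fintype R] [DecidableEq R] {ψ : AddChar R ℂ}

theorem AddChar.card_mul_sum_filter_eq (hψ : ψ.IsPrimitive) {ι : Type*} [Fintype ι]
    (f : ι → R) (t : R) (g : ι → ℂ) :
    Fintype.card R * ∑ x with f x = t, g x = ∑ s, ∑ x, ψ (s * (f x - t)) * g x := by
  rw [sum_comm, sum_filter, mul_sum]
  refine sum_congr rfl fun x _ => ?_
  rw [← sum_mul, sum_mulShift _ hψ]
  simp only [sub_eq_zero]
  split_ifs <;> simp

theorem AddChar.sum_sum_mul_addChar_neg_mul (hψ : ψ.IsPrimitive) (F : R → ℂ) (β : R) :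
    ∑ w, (∑ α, F α * ψ (-(α * w))) * ψ (β * w) = Fintype.card R * F β := by
  have hψ_mul (α w : R) : ψ (-(α * w)) * ψ (β * w) = ψ (w * (β - α)) := by
    rw [← map_add_eq_mul]; ring_nf
  simp_rw [sum_mul, mul_assoc, hψ_mul]
  rw [sum_comm]
  simp_rw [← mul_sum, sum_mulShift _ hψ, sub_eq_zero, eq_comm (a := β)]
  simp [mul_comm]

end Orthogonality

lemma AddChar.sum_diagonal_form_mul_dot_eq {R ι : Type*} [CommRing R] [Fintype R]
    [Fintype ι] [DecidableEq ι] (ψ : AddChar R ℂ) (a m : ι → R) (s t : R) :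
    ∑ x : ι → R, ψ (s * (∑ j, a j * x j ^ 2 - t)) * ψ (-(∑ j, x j * m j))
      = ψ (-(t * s)) * ∏ j, ∑ u, ψ (s * a j * u ^ 2 + -(m j) * u) := by
  rw [Fintype.prod_sum, mul_sum]
  refine sum_congr rfl fun x _ => ?_
  rw [← map_sum_eq_prod_s14, ← map_add_eq_mul, ← map_add_eq_mul]
  congr 1
  simp only [mul_sub, mul_sum, sum_add_distrib, ← sum_neg_distrib, neg_mul, mul_comm (m _)]
  ring_nf

lemma four_ne_zero_of_ringChar_ne_two {F : Type*} [Field F] (hF : ringChar F ≠ 2) :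
    (4 : F) ≠ 0 := by
  simpa [show (4 : F) = 2 ^ 2 by norm_num] using Ring.two_ne_zero hF

noncomputable def complexQuadraticChar (K : Type*) [Field K] [Fintype K] [DecidableEq K] :
    MulChar K ℂ :=
  (quadraticChar K).ringHomComp (Int.castRingHom ℂ)

section QuadraticChar

variable {K : Type*} [Field K] [Fintype K] [DecidableEq K]

local notation "η" => complexQuadraticChar K

lemma complexQuadraticChar_ne_one (hK : ringChar K ≠ 2) : complexQuadraticChar K ≠ 1 :=
  (MulChar.ringHomComp_ne_one_iff (RingHom.injective_int _)).mpr (quadraticChar_ne_one hK)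

lemma complexQuadraticChar_isQuadratic : (complexQuadraticChar K).IsQuadratic :=
  (quadraticChar_isQuadratic K).comp _

lemma complexQuadraticChar_mul_self {s : K} (hs : s ≠ 0) : η s * η s = 1 := by
  rw [← map_mul, ← sq]
  simp [complexQuadraticChar, quadraticChar_sq_one' hs]

lemma norm_complexQuadraticChar {s : K} (hs : s ≠ 0) : ‖η s‖ = 1 := by
  have h := complexQuadraticChar_mul_self hs
  rcases complexQuadraticChar_isQuadratic (K := K) s with h' | h' | h' <;> simp_all

lemma complexQuadraticChar_pow_of_odd {n : ℕ} (hn : Odd n) (s : K) : η s ^ n = η s := by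
  rcases eq_or_ne s 0 with rfl | hs
  · rw [MulChar.map_zero, zero_pow hn.pos.ne']
  · obtain ⟨k, rfl⟩ := hn
    rw [pow_succ, pow_mul, sq, complexQuadraticChar_mul_self hs, one_pow, one_mul]

lemma sum_comp_sq_eq (hK : ringChar K ≠ 2) (F : K → ℂ) :
    ∑ x, F (x ^ 2) = ∑ y, (η y + 1) * F y := by
  rw [← sum_fiberwise' univ (· ^ 2) F]
  refine sum_congr rfl fun y _ => ?_
  have hcard := quadraticChar_card_sqrts hK y
  rw [Set.toFinset_ofPred] at hcard
  rw [sum_const, nsmul_eq_mul]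
  congr 1
  simpa [complexQuadraticChar] using congrArg (Int.cast : ℤ → ℂ) hcard

lemma card_filter_sq_eq_le (hK : ringChar K ≠ 2) (y : K) : #{v | v ^ 2 = y} ≤ 2 := by
  have hcard := quadraticChar_card_sqrts hK y
  rw [Set.toFinset_ofPred] at hcard
  rcases quadraticChar_isQuadratic K y with h | h | h <;> omega

variable {χ : AddChar K ℂ}

local notation "G" => gaussSum (complexQuadraticChar K) χ

lemma norm_gaussSum_complexQuadraticChar (hK : ringChar K ≠ 2) (hχ : χ ≠ 1) :
    ‖G‖ = √(Fintype.card K) := by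
  have hsq := gaussSum_sq (complexQuadraticChar_ne_one hK) complexQuadraticChar_isQuadratic
    (IsPrimitive.of_ne_one hχ)
  rw [← Real.sqrt_sq (norm_nonneg _), ← norm_pow, hsq, norm_mul,
    norm_complexQuadraticChar (neg_ne_zero.mpr one_ne_zero), one_mul, Complex.norm_natCast]

lemma norm_gaussSum_mulShift_le (hK : ringChar K ≠ 2) (hχ : χ ≠ 1) (α : K) :
    ‖gaussSum (complexQuadraticChar K) (χ.mulShift α)‖ ≤ √(Fintype.card K) := by
  rcases eq_or_ne α 0 with rfl | hα
  · rw [mulShift_zero, gaussSum_one_right (complexQuadraticChar_ne_one hK), norm_zero]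
    positivity
  · rw [← hα.isUnit.unit_spec, gaussSum_mulShift_eq, norm_mul,
      complexQuadraticChar_isQuadratic.inv, hα.isUnit.unit_spec, norm_complexQuadraticChar hα,
      one_mul, norm_gaussSum_complexQuadraticChar hK hχ]

lemma sum_addChar_mul_sq (hK : ringChar K ≠ 2) (hχ : χ ≠ 1) {c : K} (hc : c ≠ 0) :
    ∑ x, χ (c * x ^ 2) = η c * G := by
  calc ∑ x, χ (c * x ^ 2) = ∑ y, η y * χ (c * y) + ∑ y, χ (y * c) := by
        rw [sum_comp_sq_eq hK (fun y => χ (c * y))]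
        simp only [add_mul, one_mul, sum_add_distrib, mul_comm c]
    _ = gaussSum (complexQuadraticChar K) (χ.mulShift hc.isUnit.unit) := by
        rw [sum_mulShift _ (IsPrimitive.of_ne_one hχ), if_neg hc, Nat.cast_zero, add_zero]
        rfl
    _ = η c * G := by
        rw [gaussSum_mulShift_eq, complexQuadraticChar_isQuadratic.inv, hc.isUnit.unit_spec]

lemma sum_addChar_quadratic (hK : ringChar K ≠ 2) (hχ : χ ≠ 1) {c : K} (hc : c ≠ 0) (e : K) :
    ∑ x, χ (c * x ^ 2 + e * x) = η c * G * χ (-(e ^ 2 / (4 * c))) := by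
  have h2 : (2 : K) ≠ 0 := Ring.two_ne_zero hK
  have h4 := four_ne_zero_of_ringChar_ne_two hK
  have complete_sq (y : K) : c * (y - e / (2 * c)) ^ 2 + e * (y - e / (2 * c))
      = c * y ^ 2 + -(e ^ 2 / (4 * c)) := by
    field_simp; ring
  rw [← (Equiv.subRight (e / (2 * c))).sum_comp]
  simp only [Equiv.subRight_apply, complete_sq, map_add_eq_mul, ← sum_mul,
    sum_addChar_mul_sq hK hχ hc]

/-- At `s = 0` the junk value `0⁻¹ = 0` is harmless since `η 0 = 0`. -/
noncomputable def salieSum (χ : AddChar K ℂ) (α b : K) : ℂ :=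
  ∑ s, η s * χ (α * s + b * s⁻¹)

lemma salieSum_zero_right (α : K) :
    salieSum χ α 0 = gaussSum (complexQuadraticChar K) (χ.mulShift α) := by
  simp [salieSum, gaussSum, mulShift_apply]

lemma sum_sum_filter_sq_eq_mul_addChar {b : K} (hb : b ≠ 0) (w : K) :
    ∑ α, (∑ v with v ^ 2 = α * b, χ (2 * v)) * χ (-(α * w))
      = ∑ v, χ (-(w * b⁻¹) * v ^ 2 + 2 * v) := by
  have hfiber (α v : K) : v ^ 2 = α * b ↔ v ^ 2 * b⁻¹ = α := by
    rw [mul_inv_eq_iff_eq_mul₀ hb]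
  simp_rw [hfiber, sum_mul]
  calc ∑ α, ∑ v with v ^ 2 * b⁻¹ = α, χ (2 * v) * χ (-(α * w))
      = ∑ α, ∑ v with v ^ 2 * b⁻¹ = α, χ (2 * v) * χ (-(v ^ 2 * b⁻¹ * w)) :=
        sum_congr rfl fun α _ => sum_congr rfl fun v hv => by rw [(mem_filter.mp hv).2]
    _ = ∑ v, χ (-(w * b⁻¹) * v ^ 2 + 2 * v) := by
        rw [sum_fiberwise]
        refine sum_congr rfl fun v _ => ?_
        rw [← map_add_eq_mul]
        ring_nf

lemma sum_gaussSum_mul_sum_filter_sq_eq_mul_addChar (hK : ringChar K ≠ 2) (hχ : χ ≠ 1) {b : K}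
    (hb : b ≠ 0) (w : K) :
    ∑ α, η b * G * (∑ v with v ^ 2 = α * b, χ (2 * v)) * χ (-(α * w))
      = Fintype.card K * (η w * χ (b * w⁻¹)) := by
  simp_rw [mul_assoc, ← mul_sum, sum_sum_filter_sq_eq_mul_addChar hb w]
  rcases eq_or_ne w 0 with rfl | hw
  · simp_rw [zero_mul, neg_zero, zero_mul, zero_add, mul_comm (2 : K),
      sum_mulShift _ (IsPrimitive.of_ne_one hχ), if_neg (Ring.two_ne_zero hK)]
    simp [MulChar.map_zero]
  have hc : -(w * b⁻¹) ≠ 0 := by simp [hw, hb]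
  have h4 := four_ne_zero_of_ringChar_ne_two hK
  have hG_sq : G * G = η (-1) * Fintype.card K := by
    rw [← sq, gaussSum_sq (complexQuadraticChar_ne_one hK) complexQuadraticChar_isQuadratic
      (IsPrimitive.of_ne_one hχ)]
  have hη : η b * η (-(w * b⁻¹)) * η (-1) = η w := by
    rw [← map_mul, ← map_mul]
    field_simp
  have hexp : -((2 : K) ^ 2 / (4 * -(w * b⁻¹))) = b * w⁻¹ := by
    field_simp
    norm_num
  rw [sum_addChar_quadratic hK hχ hc, hexp, ← hη]
  linear_combination (η b * η (-(w * b⁻¹)) * χ (b * w⁻¹)) * hG_sq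

/-- Both sides, as functions of `β`, have Fourier transform `w ↦ q η(w) χ(b / w)`. -/
lemma salieSum_eq (hK : ringChar K ≠ 2) (hχ : χ ≠ 1) {b : K} (hb : b ≠ 0) (β : K) :
    salieSum χ β b = η b * G * ∑ v with v ^ 2 = β * b, χ (2 * v) := by
  refine mul_left_cancel₀ (Nat.cast_ne_zero.mpr Fintype.card_ne_zero : (Fintype.card K : ℂ) ≠ 0) ?_
  rw [← sum_sum_mul_addChar_neg_mul (IsPrimitive.of_ne_one hχ)
    (fun α => η b * G * ∑ v with v ^ 2 = α * b, χ (2 * v)) β]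
  simp_rw [sum_gaussSum_mul_sum_filter_sq_eq_mul_addChar hK hχ hb, salieSum, mul_sum]
  refine sum_congr rfl fun w _ => ?_
  rw [map_add_eq_mul]
  ring

lemma norm_salieSum_le (hK : ringChar K ≠ 2) (hχ : χ ≠ 1) (α b : K) :
    ‖salieSum χ α b‖ ≤ 2 * √(Fintype.card K) := by
  rcases eq_or_ne b 0 with rfl | hb
  · rw [salieSum_zero_right]
    linarith [norm_gaussSum_mulShift_le hK hχ α, Real.sqrt_nonneg (Fintype.card K)]
  have hsqrts : ‖∑ v with v ^ 2 = α * b, χ (2 * v)‖ ≤ 2 :=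
    calc ‖∑ v with v ^ 2 = α * b, χ (2 * v)‖ ≤ ∑ v with v ^ 2 = α * b, ‖χ (2 * v)‖ :=
          norm_sum_le _ _
      _ = #{v | v ^ 2 = α * b} := by simp
      _ ≤ 2 := by exact_mod_cast card_filter_sq_eq_le hK (α * b)
  rw [salieSum_eq hK hχ hb, norm_mul, norm_mul, norm_complexQuadraticChar hb, one_mul,
    norm_gaussSum_complexQuadraticChar hK hχ, mul_comm]
  gcongr

section DiagonalQuadric

variable {ι : Type*} [Fintype ι]

lemma prod_sum_addChar_quadratic_eq (hK : ringChar K ≠ 2) (hχ : χ ≠ 1) {a : ι → K}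
    (ha : ∀ j, a j ≠ 0) (m : ι → K) {s : K} (hs : s ≠ 0) :
    ∏ j, ∑ u, χ (s * a j * u ^ 2 + -(m j) * u)
      = η s ^ Fintype.card ι * (∏ j, η (a j)) * G ^ Fintype.card ι
          * χ ((∑ j, -(m j ^ 2 / (4 * a j))) * s⁻¹) := by
  have h4 := four_ne_zero_of_ringChar_ne_two hK
  simp_rw [sum_addChar_quadratic hK hχ (mul_ne_zero hs (ha _)), prod_mul_distrib, map_mul,
    prod_mul_distrib, prod_const, card_univ, sum_mul, map_sum_eq_prod_s14]
  congr 1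
  refine prod_congr rfl fun j _ => congrArg χ ?_
  field_simp

lemma prod_sum_addChar_mul_eq_zero (hχ : χ ≠ 1) {m : ι → K} (hm : m ≠ 0) :
    ∏ j, ∑ u, χ (m j * u) = 0 := by
  obtain ⟨j, hj⟩ := Function.ne_iff.mp hm
  refine prod_eq_zero (mem_univ j) ?_
  simp_rw [mul_comm (m j), sum_mulShift _ (IsPrimitive.of_ne_one hχ)]
  simpa using hj

theorem card_mul_sum_diagonal_eq_salieSum [DecidableEq ι] (hK : ringChar K ≠ 2) (hχ : χ ≠ 1)
    (hodd : Odd (Fintype.card ι)) {a : ι → K} (ha : ∀ j, a j ≠ 0) {m : ι → K} (hm : m ≠ 0)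
    (t : K) :
    Fintype.card K * ∑ x ∈ univ.filter (fun x : ι → K => ∑ j, a j * x j ^ 2 = t),
        χ (-(∑ j, x j * m j))
      = (∏ j, η (a j)) * G ^ Fintype.card ι * salieSum χ (-t) (∑ j, -(m j ^ 2 / (4 * a j))) := by
  rw [card_mul_sum_filter_eq (IsPrimitive.of_ne_one hχ), salieSum, mul_sum]
  refine sum_congr rfl fun s _ => ?_
  rw [sum_diagonal_form_mul_dot_eq]
  rcases eq_or_ne s 0 with rfl | hs
  · simp_rw [zero_mul, zero_add]
    rw [show ∏ j, ∑ u, χ (-m j * u) = 0 from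
      prod_sum_addChar_mul_eq_zero hχ (neg_ne_zero.mpr hm), MulChar.map_zero, mul_zero, zero_mul,
      mul_zero]
  rw [prod_sum_addChar_quadratic_eq hK hχ ha m hs, complexQuadraticChar_pow_of_odd hodd,
    map_add_eq_mul, neg_mul]
  ring

end DiagonalQuadric

end QuadraticChar

lemma Real.sqrt_pow_succ_eq_mul_rpow {x : ℝ} (hx : 0 ≤ x) (n : ℕ) :
    √x ^ (n + 1) = x * x ^ (((n : ℝ) - 1) / 2) := by
  have hexp : (1 : ℝ) + ((n : ℝ) - 1) / 2 ≠ 0 := by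
    have := n.cast_nonneg (α := ℝ)
    exact (by linarith : (0 : ℝ) < _).ne'
  rw [Real.sqrt_eq_rpow, ← Real.rpow_natCast, ← Real.rpow_mul hx, ← Real.rpow_one_add' hx hexp]
  congr 1
  push_cast
  ring

theorem stmt14_general (d : ℕ) (hodd : Odd d) :
    ∃ C : ℝ, 0 < C ∧
      ∀ (K : Type) [Field K] [Fintype K] [DecidableEq K],
        ringChar K ≠ 2 →
        ∀ a : Fin d → K, (∀ j, a j ≠ 0) →
        ∀ (χ : AddChar K ℂ), χ ≠ 1 →
        ∀ m : Fin d → K, m ≠ 0 → ∀ t : K,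
          ‖(∑ x ∈ Finset.univ.filter
                (fun x : Fin d → K => ∑ j, a j * x j ^ 2 = t),
              χ (-(∑ i, x i * m i)))‖ ≤
            C * (Fintype.card K : ℝ) ^ (((d : ℝ) - 1) / 2) := by
  refine ⟨2, two_pos, fun K _ _ _ hK a ha χ hχ m hm t => ?_⟩
  have hq : (0 : ℝ) < Fintype.card K := by exact_mod_cast Fintype.card_pos
  have hnorm := congrArg norm
    (card_mul_sum_diagonal_eq_salieSum hK hχ (by simpa using hodd) ha hm t)
  rw [norm_mul, norm_mul, norm_mul, norm_pow, Complex.norm_natCast, norm_prod,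
    prod_eq_one fun j _ => norm_complexQuadraticChar (ha j), one_mul,
    norm_gaussSum_complexQuadraticChar hK hχ, Fintype.card_fin] at hnorm
  rw [← mul_le_mul_iff_right₀ hq, hnorm]
  calc √(Fintype.card K) ^ d * ‖salieSum χ (-t) _‖
      ≤ √(Fintype.card K) ^ d * (2 * √(Fintype.card K)) := by
        gcongr
        exact norm_salieSum_le hK hχ _ _
    _ = Fintype.card K * (2 * (Fintype.card K : ℝ) ^ (((d : ℝ) - 1) / 2)) := by
        rw [mul_left_comm, ← pow_succ, Real.sqrt_pow_succ_eq_mul_rpow hq.le]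
        ring

/-- In odd dimensions `d ≥ 3`, for `P(x) = ∑ a_j x_j²` with `a_j ≠ 0`
over a finite field of odd characteristic, the varieties `V_t` satisfy
`|∑_{x ∈ V_t} χ(-x·m)| ≤ C q^{(d-1)/2}` for all `m ≠ 0` and ALL `t ∈ F_q`. -/
theorem stmt14 (d : ℕ) (hd : 3 ≤ d) (hodd : Odd d) :
    ∃ C : ℝ, 0 < C ∧
      ∀ (K : Type) [Field K] [Fintype K] [DecidableEq K],
        ringChar K ≠ 2 →
        ∀ a : Fin d → K, (∀ j, a j ≠ 0) →
        ∀ (χ : AddChar K ℂ), χ ≠ 1 →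
        ∀ m : Fin d → K, m ≠ 0 → ∀ t : K,
          ‖(∑ x ∈ Finset.univ.filter
                (fun x : Fin d → K => ∑ j, a j * x j ^ 2 = t),
              χ (-(∑ i, x i * m i)))‖ ≤
            C * (Fintype.card K : ℝ) ^ (((d : ℝ) - 1) / 2) :=
  stmt14_general d hodd
end
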